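/- Let P = u_1 v_1 u_2 v_2 ⋯ u_r v_r be a good feasible path with u_i ∈ X, v_i ∈ Y and u_i v_i ∈ M for all 1 ≤ i ≤ r. Suppose that e({u_1, v_r}, P) ≥ (3/2)r and that the subgraph induced by V(P) contains no feasible path P′ with M_0(P′) = M_0(P) and l(P′) < l(P). Then the subgraph induced by V(P) contains a feasible cycle C with V(C) = V(P), and consequently M_0(C) = M_0(P). -/

import Mathlib

/-- `e(S, T)`: the number of edges of `G` with one end in `S` and the other in `T`. -/
noncomputable def eBtw {V : Type*} (G : SimpleGraph V) (S T : Set V) : ℕ :=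
  {e : Sym2 V | e ∈ G.edgeSet ∧ ∃ a b, e = s(a, b) ∧ a ∈ S ∧ b ∈ T}.ncard

/-- The set of vertices `{xᵢ, yᵢ : i ∈ F}` corresponding to a set `F` of matching
indices; here `Sum.inl i` plays the role of `xᵢ ∈ X` and `Sum.inr i` of `yᵢ ∈ Y`. -/
def iVerts {α : Type*} (F : Set α) : Set (α ⊕ α) :=
  {w | ∃ i ∈ F, w = Sum.inl i ∨ w = Sum.inr i}

/-- An `M`-alternating cycle `x_{i₁} y_{i₁} x_{i₂} y_{i₂} ⋯ x_{i_r} y_{i_r} x_{i₁}`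
(where `M = {xᵢyᵢ}` is the perfect matching), encoded by its list of matching
indices `i₁, …, i_r`: consecutive (cyclically) indices are joined by the non-matching
edges `y_{i_j} x_{i_{j+1}}`.  Such a cycle has `2 * l.length` edges, `l.length` of
which are matching edges. -/
def AltCycle {α : Type*} (G : SimpleGraph (α ⊕ α)) (l : List α) : Prop :=
  2 ≤ l.length ∧ l.Nodup ∧
    ∀ i : Fin l.length,
      G.Adj (Sum.inr (l.get i))
        (Sum.inl (l.get ⟨((i : ℕ) + 1) % l.length, Nat.mod_lt _ i.pos⟩))

/-- An `M`-alternating path `x_{i₁} y_{i₁} ⋯ x_{i_r} y_{i_r}` beginning and ending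
with matching edges, encoded by its list of matching indices. -/
def AltPath {α : Type*} (G : SimpleGraph (α ⊕ α)) (l : List α) : Prop :=
  l ≠ [] ∧ l.Nodup ∧ l.Chain' (fun a b => G.Adj (Sum.inr a) (Sum.inl b))

/-- A feasible path: an `M`-alternating path `x_{i₁} y_{i₁} ⋯ x_{i_r} y_{i_r}` whose
end-vertices `x_{i₁}` and `y_{i_r}` belong to `V(M₀)`, where `S` is the index set of
`M₀ ⊆ M`. -/
def FeasPath {α : Type*} [DecidableEq α] (G : SimpleGraph (α ⊕ α)) (S : Finset α)
    (l : List α) : Prop :=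
  AltPath G l ∧ ∀ h : l ≠ [], l.head h ∈ S ∧ l.getLast h ∈ S


section AuxAll
variable {α : Type*}

lemma my_perm_toFinset [DecidableEq α] {l₁ l₂ : List α} (h : l₁.Perm l₂) :
    l₁.toFinset = l₂.toFinset := by
  ext a; simp [List.mem_toFinset, h.mem_iff]

lemma my_rot (R : α → α → Prop) (l : List α) (d : α)
    (hch : l.Chain' R) (j k : ℕ) (hj : 1 ≤ j) (hjk : j ≤ k) (hk : k + 1 < l.length)
    (hB : R (l.getD (l.length - 1) d) (l.getD j d))
    (hA : R (l.getD k d) (l.getD 0 d)) :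
    ∃ Q : List α, Q.Perm l ∧ Q.Chain' R ∧ Q ≠ [] ∧
      Q.head? = some (l.getD (k + 1) d) ∧ Q.getLast? = some (l.getD (j - 1) d) := by
  set L := l.length with hL
  set l1 := l.drop (k + 1) with hl1
  set l2 := (l.take (k + 1)).drop j with hl2
  set l3 := l.take j with hl3
  have hlen1 : l1.length = L - (k + 1) := by simp [hl1, hL]
  have hlen2 : l2.length = (k + 1) - j := by simp [hl2]; omega
  have hlen3 : l3.length = j := by simp [hl3]; omega
  have h1ne : l1 ≠ [] := by
    intro h; rw [← List.length_eq_zero_iff] at h; omega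
  have h2ne : l2 ≠ [] := by
    intro h; rw [← List.length_eq_zero_iff] at h; omega
  have h3ne : l3 ≠ [] := by
    intro h; rw [← List.length_eq_zero_iff] at h; omega
  refine ⟨l1 ++ (l2 ++ l3), ?_, ?_, by simp [h1ne], ?_, ?_⟩
  · -- perm
    have h23 : (l2 ++ l3).Perm (l.take (k + 1)) := by
      have h3 : l3 = (l.take (k + 1)).take j := by
        rw [hl3, List.take_take]; congr 1; omega
      calc (l2 ++ l3).Perm (l3 ++ l2) := List.perm_append_comm
        _ = l.take (k+1) := by rw [h3, hl2, List.take_append_drop]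
    calc (l1 ++ (l2 ++ l3)).Perm ((l2 ++ l3) ++ l1) := List.perm_append_comm
      _ = (l2 ++ l3) ++ l.drop (k+1) := rfl
      _ |>.Perm (l.take (k+1) ++ l.drop (k+1)) := h23.append_right _
      _ = l := List.take_append_drop _ _
  · -- chain'
    rw [List.Chain', List.isChain_append]
    refine ⟨hch.drop _, ?_, ?_⟩
    · rw [List.isChain_append]
      refine ⟨(hch.take _).drop _, hch.take _, ?_⟩
      intro x hx y hy
      -- x = l.getD k d, y = l.getD 0 d
      have hx' : l2.getLast? = some (l.getD k d) := by
        rw [List.getLast?_eq_getElem?, hlen2, hl2, List.getElem?_drop,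
          List.getElem?_take_of_lt (by omega)]
        rw [show j + ((k+1) - j - 1) = k by omega, List.getElem?_eq_getElem (by omega)]
        rw [List.getD_eq_getElem l d (show k < l.length by omega)]
      have hy' : l3.head? = some (l.getD 0 d) := by
        rw [List.head?_eq_getElem?, hl3, List.getElem?_take_of_lt (by omega),
          List.getElem?_eq_getElem (by omega)]
        rw [List.getD_eq_getElem l d (show 0 < l.length by omega)]
      rw [hx'] at hx; rw [hy'] at hy
      rw [Option.mem_def, Option.some_inj] at hx hy
      rw [← hx, ← hy]
      exact hA
    · intro x hx y hy
      have hx' : l1.getLast? = some (l.getD (L - 1) d) := by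
        rw [List.getLast?_eq_getElem?, hlen1, hl1, List.getElem?_drop]
        rw [show k + 1 + (L - (k+1) - 1) = L - 1 by omega,
          List.getElem?_eq_getElem (by omega)]
        rw [List.getD_eq_getElem l d (show L - 1 < l.length by omega)]
      have hy' : (l2 ++ l3).head? = some (l.getD j d) := by
        rw [List.head?_append_of_ne_nil _ h2ne]
        rw [List.head?_eq_getElem?, hl2, List.getElem?_drop,
          List.getElem?_take_of_lt (by omega)]
        rw [show j + 0 = j by omega, List.getElem?_eq_getElem (by omega)]
        rw [List.getD_eq_getElem l d (show j < l.length by omega)]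
      rw [hx'] at hx; rw [hy'] at hy
      rw [Option.mem_def, Option.some_inj] at hx hy
      rw [← hx, ← hy]
      exact hB
  · rw [List.head?_append_of_ne_nil _ h1ne, List.head?_eq_getElem?, hl1,
      List.getElem?_drop, show k + 1 + 0 = k + 1 by omega,
      List.getElem?_eq_getElem (by omega)]
    rw [List.getD_eq_getElem l d (show k + 1 < l.length by omega)]
  · rw [List.getLast?_append, List.getLast?_append_of_ne_nil _ h3ne]
    rw [List.getLast?_eq_getElem?, hlen3, hl3,
      List.getElem?_take_of_lt (by omega), List.getElem?_eq_getElem (by omega)]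
    rw [List.getD_eq_getElem l d (show j - 1 < l.length by omega)]
    simp

lemma my_trim [DecidableEq α] (R : α → α → Prop) (S : Finset α) :
    ∀ (q : List α), q.Chain' R → (∃ a ∈ q, a ∈ S) →
    ∃ q' : List α, q' ≠ [] ∧ q'.Chain' R ∧ q'.Sublist q ∧
      (∀ h : q' ≠ [], q'.head h ∈ S ∧ q'.getLast h ∈ S) ∧
      q'.toFinset ∩ S = q.toFinset ∩ S := by
  suffices H : ∀ N (q : List α), q.length ≤ N → q.Chain' R → (∃ a ∈ q, a ∈ S) →
      ∃ q' : List α, q' ≠ [] ∧ q'.Chain' R ∧ q'.Sublist q ∧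
        (∀ h : q' ≠ [], q'.head h ∈ S ∧ q'.getLast h ∈ S) ∧
        q'.toFinset ∩ S = q.toFinset ∩ S by
    exact fun q => H q.length q le_rfl
  intro N
  induction N with
  | zero =>
    rintro q hlen hch ⟨a, ha, _⟩
    rw [Nat.le_zero, List.length_eq_zero_iff] at hlen
    subst hlen; simp at ha
  | succ N ih =>
    rintro q hlen hch ⟨a, ha, haS⟩
    have hqne : q ≠ [] := List.ne_nil_of_mem ha
    by_cases h1 : q.head hqne ∈ S
    · by_cases h2 : q.getLast hqne ∈ S
      · exact ⟨q, hqne, hch, List.Sublist.refl q, fun _ => ⟨h1, h2⟩, rfl⟩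
      · -- drop last
        have hql : q.dropLast ++ [q.getLast hqne] = q := List.dropLast_append_getLast hqne
        have hch0 : q.dropLast.Chain' R := by
          have := hch; rw [← hql] at this
          exact (List.isChain_append.1 this).1
        have hex0 : ∃ b ∈ q.dropLast, b ∈ S := by
          refine ⟨a, ?_, haS⟩
          rw [← hql] at ha
          rcases List.mem_append.1 ha with h | h
          · exact h
          · simp only [List.mem_singleton] at h; subst h; exact absurd haS h2
        have hlen0 : q.dropLast.length ≤ N := by
          have : q.length ≥ 1 := List.length_pos_iff.2 hqne
          rw [List.length_dropLast]; omega
        obtain ⟨q', h1', h2', h3', h4', h5'⟩ := ih q.dropLast hlen0 hch0 hex0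
        refine ⟨q', h1', h2', h3'.trans (List.dropLast_sublist q), h4', ?_⟩
        rw [h5']
        ext x
        simp only [Finset.mem_inter, List.mem_toFinset]
        constructor
        · rintro ⟨hx1, hx2⟩
          exact ⟨(List.dropLast_sublist q).mem hx1, hx2⟩
        · rintro ⟨hx1, hx2⟩
          rw [← hql] at hx1
          rcases List.mem_append.1 hx1 with h | h
          · exact ⟨h, hx2⟩
          · simp only [List.mem_singleton] at h; subst h; exact absurd hx2 h2
    · -- drop head
      have hql : q.head hqne :: q.tail = q := List.cons_head_tail hqne
      have hch0 : q.tail.Chain' R := hch.tail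
      have hex0 : ∃ b ∈ q.tail, b ∈ S := by
        refine ⟨a, ?_, haS⟩
        rw [← hql] at ha
        rcases List.mem_cons.1 ha with h | h
        · subst h; exact absurd haS h1
        · exact h
      have hlen0 : q.tail.length ≤ N := by
        have : q.length ≥ 1 := List.length_pos_iff.2 hqne
        rw [List.length_tail]; omega
      obtain ⟨q', h1', h2', h3', h4', h5'⟩ := ih q.tail hlen0 hch0 hex0
      refine ⟨q', h1', h2', h3'.trans (List.tail_sublist q), h4', ?_⟩
      rw [h5']
      ext x
      simp only [Finset.mem_inter, List.mem_toFinset]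
      constructor
      · rintro ⟨hx1, hx2⟩
        exact ⟨(List.tail_sublist q).mem hx1, hx2⟩
      · rintro ⟨hx1, hx2⟩
        rw [← hql] at hx1
        rcases List.mem_cons.1 hx1 with h | h
        · subst h; exact absurd hx2 h1
        · exact ⟨h, hx2⟩

end AuxAll

section AuxG
variable {n : ℕ}
lemma my_ebtw_le (G : SimpleGraph (Fin n ⊕ Fin n))
    (hX : ∀ i j : Fin n, ¬ G.Adj (Sum.inl i) (Sum.inl j))
    (hY : ∀ i j : Fin n, ¬ G.Adj (Sum.inr i) (Sum.inr j))
    (h t : Fin n) (l : List (Fin n)) (In Out : Finset (Fin n))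
    (hIn : ∀ a, a ∈ l → G.Adj (Sum.inr a) (Sum.inl h) → a ∈ In)
    (hOut : ∀ b, b ∈ l → G.Adj (Sum.inr t) (Sum.inl b) → b ∈ Out) :
    eBtw G ({Sum.inl h, Sum.inr t} : Set (Fin n ⊕ Fin n)) (iVerts {i | i ∈ l}) ≤
      In.card + Out.card := by
  classical
  have hsub : {e : Sym2 (Fin n ⊕ Fin n) | e ∈ G.edgeSet ∧ ∃ a b, e = s(a, b) ∧
      a ∈ ({Sum.inl h, Sum.inr t} : Set (Fin n ⊕ Fin n)) ∧ b ∈ iVerts {i | i ∈ l}} ⊆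
      ↑(In.image (fun i => s(Sum.inl h, Sum.inr i))) ∪
      ↑(Out.image (fun i => s(Sum.inr t, Sum.inl i))) := by
    rintro e ⟨he, a, b, rfl, ha, hb⟩
    obtain ⟨i, hi, hb'⟩ := hb
    rw [SimpleGraph.mem_edgeSet] at he
    rcases ha with ha | ha
    · subst ha
      rcases hb' with rfl | rfl
      · exact absurd he (hX _ _)
      · left
        simp only [Finset.coe_image, Set.mem_image, Finset.mem_coe]
        exact ⟨i, hIn i hi he.symm, rfl⟩
    · rw [Set.mem_singleton_iff] at ha
      subst ha
      rcases hb' with rfl | rfl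
      · right
        simp only [Finset.coe_image, Set.mem_image, Finset.mem_coe]
        exact ⟨i, hOut i hi he, rfl⟩
      · exact absurd he (hY _ _)
  calc eBtw G _ _ ≤ (↑(In.image (fun i => s(Sum.inl h, Sum.inr i))) ∪
      ↑(Out.image (fun i => s(Sum.inr t, Sum.inl i))) : Set (Sym2 (Fin n ⊕ Fin n))).ncard := by
        apply Set.ncard_le_ncard hsub
    _ ≤ (↑(In.image (fun i => s(Sum.inl h, Sum.inr i))) : Set (Sym2 (Fin n ⊕ Fin n))).ncard +
        (↑(Out.image (fun i => s(Sum.inr t, Sum.inl i))) : Set (Sym2 (Fin n ⊕ Fin n))).ncard :=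
        Set.ncard_union_le _ _
    _ ≤ In.card + Out.card := by
        rw [Set.ncard_coe_finset, Set.ncard_coe_finset]
        exact Nat.add_le_add (Finset.card_image_le) (Finset.card_image_le)


lemma my_ebtw_one (G : SimpleGraph (Fin n ⊕ Fin n)) (x : Fin n) :
    eBtw G ({Sum.inl x, Sum.inr x} : Set (Fin n ⊕ Fin n)) (iVerts {i | i ∈ [x]}) ≤ 1 := by
  have hsub : {e : Sym2 (Fin n ⊕ Fin n) | e ∈ G.edgeSet ∧ ∃ a b, e = s(a, b) ∧
      a ∈ ({Sum.inl x, Sum.inr x} : Set (Fin n ⊕ Fin n)) ∧ b ∈ iVerts {i | i ∈ [x]}} ⊆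
      {s(Sum.inl x, Sum.inr x)} := by
    rintro e ⟨he, a, b, rfl, ha, hb⟩
    obtain ⟨i, hi, hb'⟩ := hb
    simp only [List.mem_singleton, Set.mem_setOf_eq] at hi
    subst hi
    rw [SimpleGraph.mem_edgeSet] at he
    have hne := G.ne_of_adj he
    rcases ha with ha | ha
    · subst ha
      rcases hb' with rfl | rfl
      · exact absurd rfl hne
      · rfl
    · rw [Set.mem_singleton_iff] at ha
      subst ha
      rcases hb' with rfl | rfl
      · simp only [Set.mem_singleton_iff]
        rw [Sym2.eq_swap]
      · exact absurd rfl hne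
  calc eBtw G _ _ ≤ ({s(Sum.inl x, Sum.inr x)} : Set (Sym2 (Fin n ⊕ Fin n))).ncard :=
        Set.ncard_le_ncard hsub (Set.finite_singleton _)
    _ = 1 := Set.ncard_singleton _


end AuxG

/-- **Lemma 4.** Let `P = u₁v₁⋯u_rv_r` be a good feasible path (encoded by its
nonempty list `l` of matching indices, `r = l.length`; goodness is hypothesis
`hgood`).  Suppose `e({u₁, v_r}, P) ≥ (3/2)·r` and that `[V(P)]` contains no feasible
path `P′` with `M₀(P′) = M₀(P)` and `l(P′) < l(P)`.  Then `[V(P)]` contains a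
feasible cycle `C` with `V(C) = V(P)` (hence `M₀(C) = M₀(P)`). -/
theorem stmt7 (n : ℕ) (G : SimpleGraph (Fin n ⊕ Fin n))
    (hX : ∀ i j : Fin n, ¬ G.Adj (Sum.inl i) (Sum.inl j))
    (hY : ∀ i j : Fin n, ¬ G.Adj (Sum.inr i) (Sum.inr j))
    (hM : ∀ i : Fin n, G.Adj (Sum.inl i) (Sum.inr i))
    (S : Finset (Fin n))
    (l : List (Fin n)) (hne : l ≠ []) (hP : FeasPath G S l)
    (hgood : ∀ (l' : List (Fin n)) (h' : l' ≠ []), FeasPath G S l' →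
      (∀ a ∈ l', a ∈ l) → l'.length = l.length → l'.toFinset ∩ S = l.toFinset ∩ S →
      eBtw G ({Sum.inl (l.head hne), Sum.inr (l.getLast hne)} : Set (Fin n ⊕ Fin n))
          (iVerts {i | i ∈ l}) ≤
        eBtw G ({Sum.inl (l'.head h'), Sum.inr (l'.getLast h')} : Set (Fin n ⊕ Fin n))
          (iVerts {i | i ∈ l'}))
    (hE : (3 / 2 : ℚ) * l.length ≤
      (eBtw G ({Sum.inl (l.head hne), Sum.inr (l.getLast hne)} : Set (Fin n ⊕ Fin n))
        (iVerts {i | i ∈ l}) : ℚ))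
    (hmin : ¬ ∃ l' : List (Fin n), FeasPath G S l' ∧ (∀ a ∈ l', a ∈ l) ∧
      l'.toFinset ∩ S = l.toFinset ∩ S ∧ l'.length < l.length) :
    ∃ c : List (Fin n), AltCycle G c ∧ c.toFinset = l.toFinset ∧
      c.toFinset ∩ S = l.toFinset ∩ S := by
  classical
  by_contra hcyc
  obtain ⟨⟨hne2, hnd, hch⟩, hends⟩ := hP
  have hr1 : 1 ≤ l.length := List.length_pos_iff.2 hne
  -- rule out length 1
  rcases eq_or_lt_of_le hr1 with hr2 | hr2
  · obtain ⟨x, hx⟩ := List.length_eq_one_iff.1 hr2.symm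
    subst hx
    have h1 := my_ebtw_one G x
    rw [show [x].head hne = x from rfl, show [x].getLast hne = x from rfl] at hE
    have h2 : ((eBtw G ({Sum.inl x, Sum.inr x} : Set (Fin n ⊕ Fin n))
        (iVerts {i | i ∈ [x]}) : ℕ) : ℚ) ≤ 1 := by exact_mod_cast h1
    rw [List.length_singleton] at hE
    push_cast at hE
    linarith
  -- main case
  set r := l.length with hr
  set d : Fin n := l.head hne with hd
  have hS1 : l.head hne ∈ S := (hends hne).1
  have hgetD_mem : ∀ i, i < r → l.getD i d ∈ l := by
    intro i hi
    rw [List.getD_eq_getElem l d hi]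
    exact List.getElem_mem _
  have hinj : ∀ i j, i < r → j < r → l.getD i d = l.getD j d → i = j := by
    intro i j hi hj heq
    rw [List.getD_eq_getElem l d hi, List.getD_eq_getElem l d hj] at heq
    have h2 : l.get ⟨i, hi⟩ = l.get ⟨j, hj⟩ := by
      simpa [List.get_eq_getElem] using heq
    have := List.nodup_iff_injective_get.1 hnd h2
    exact congrArg Fin.val this
  have hhead : l.head hne = l.getD 0 d := by
    rw [List.getD_eq_getElem l d (by omega), List.head_eq_getElem]
  have hlast : l.getLast hne = l.getD (r - 1) d := by
    rw [List.getD_eq_getElem l d (by omega), List.getLast_eq_getElem]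
  have hr2' : 2 ≤ r := hr2
  have key : ∀ q : List (Fin n), q.Chain' (fun a b => G.Adj (Sum.inr a) (Sum.inl b)) →
      q.Perm l → ∀ hq : q ≠ [],
      (¬ G.Adj (Sum.inr (q.getLast hq)) (Sum.inl (q.head hq))) ∧
      3 * r ≤ 2 * ((l.toFinset.filter
          (fun a => G.Adj (Sum.inr a) (Sum.inl (q.head hq)))).card
        + (l.toFinset.filter
          (fun b => G.Adj (Sum.inr (q.getLast hq)) (Sum.inl b))).card) := by
    intro q hchq hperm hq
    have hndq : q.Nodup := hperm.nodup_iff.2 hnd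
    have hlq : q.toFinset ∩ S = l.toFinset ∩ S := by rw [my_perm_toFinset hperm]
    have hqlen : q.length = r := hperm.length_eq
    -- no closing arc
    have hclose : ¬ G.Adj (Sum.inr (q.getLast hq)) (Sum.inl (q.head hq)) := by
      intro hadj
      have hstep : ∀ (a b : Fin q.length), ((b : ℕ) = (a : ℕ) + 1) →
          G.Adj (Sum.inr (q.get a)) (Sum.inl (q.get b)) := by
        intro a b hb
        have hblt : (a : ℕ) + 1 < q.length := hb ▸ b.isLt
        have hba : b = ⟨(a : ℕ) + 1, hblt⟩ := Fin.ext hb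
        rw [hba]
        have h := List.isChain_iff_getElem.1 hchq a (by omega)
        exact h
      have hwrap : ∀ (a b : Fin q.length), ((a : ℕ) = q.length - 1) → ((b : ℕ) = 0) →
          G.Adj (Sum.inr (q.get a)) (Sum.inl (q.get b)) := by
        intro a b ha hb
        have hga : q.get a = q.getLast hq := by
          rw [List.getLast_eq_getElem, List.get_eq_getElem]
          congr 1
        have hgb : q.get b = q.head hq := by
          have hb0 : b = ⟨0, by omega⟩ := Fin.ext hb
          rw [hb0, List.get_mk_zero]
        rw [hga, hgb]
        exact hadj
      refine hcyc ⟨q, ⟨by omega, hndq, ?_⟩, my_perm_toFinset hperm, by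
        rw [my_perm_toFinset hperm]⟩
      intro i
      rcases Nat.lt_or_ge ((i : ℕ) + 1) q.length with hlt | hge
      · exact hstep i _ (Nat.mod_eq_of_lt hlt)
      · have hi1 : (i : ℕ) = q.length - 1 := by have := i.isLt; omega
        have hi2 : ((i : ℕ) + 1) % q.length = 0 := by
          have := i.isLt; rw [show (i : ℕ) + 1 = q.length by omega, Nat.mod_self]
        exact hwrap i _ hi1 hi2
    refine ⟨hclose, ?_⟩
    -- feasibility via trimming
    obtain ⟨q', hq'ne, hq'ch, hq'sub, hq'ends, hq'S⟩ :=
      my_trim (fun a b => G.Adj (Sum.inr a) (Sum.inl b)) S q hchq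
        ⟨l.head hne, hperm.mem_iff.2 (List.head_mem hne), hS1⟩
    have hlen_eq : q'.length = q.length := by
      by_contra hneq
      have hlt : q'.length < q.length := lt_of_le_of_ne hq'sub.length_le hneq
      exact hmin ⟨q', ⟨⟨hq'ne, hndq.sublist hq'sub, hq'ch⟩, hq'ends⟩,
        fun a ha => hperm.subset (hq'sub.subset ha),
        by rw [hq'S, hlq], by omega⟩
    have hq'q : q' = q := hq'sub.eq_of_length hlen_eq
    subst hq'q
    have hfeas : FeasPath G S q' := ⟨⟨hq, hndq, hchq⟩, hq'ends⟩
    have hg := hgood q' hq hfeas (fun a ha => hperm.subset ha) hperm.length_eq hlq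
    have hiv : {i : Fin n | i ∈ q'} = {i | i ∈ l} := Set.ext fun i => hperm.mem_iff
    rw [hiv] at hg
    have hub := my_ebtw_le G hX hY (q'.head hq) (q'.getLast hq) l
      (l.toFinset.filter (fun a => G.Adj (Sum.inr a) (Sum.inl (q'.head hq))))
      (l.toFinset.filter (fun b => G.Adj (Sum.inr (q'.getLast hq)) (Sum.inl b)))
      (fun a ha hadj => Finset.mem_filter.2 ⟨List.mem_toFinset.2 ha, hadj⟩)
      (fun b hb hadj => Finset.mem_filter.2 ⟨List.mem_toFinset.2 hb, hadj⟩)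
    have hfin : eBtw G ({Sum.inl (l.head hne), Sum.inr (l.getLast hne)} :
        Set (Fin n ⊕ Fin n)) (iVerts {i | i ∈ l}) ≤
        (l.toFinset.filter (fun a => G.Adj (Sum.inr a) (Sum.inl (q'.head hq)))).card
        + (l.toFinset.filter (fun b => G.Adj (Sum.inr (q'.getLast hq)) (Sum.inl b))).card :=
      le_trans hg hub
    have hq2 : ((eBtw G ({Sum.inl (l.head hne), Sum.inr (l.getLast hne)} :
        Set (Fin n ⊕ Fin n)) (iVerts {i | i ∈ l}) : ℕ) : ℚ) ≤
        (((l.toFinset.filter (fun a => G.Adj (Sum.inr a) (Sum.inl (q'.head hq)))).card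
        + (l.toFinset.filter (fun b => G.Adj (Sum.inr (q'.getLast hq)) (Sum.inl b))).card
          : ℕ) : ℚ) := by exact_mod_cast hfin
    have h3 : (3 : ℚ) * r ≤ 2 * (((l.toFinset.filter
          (fun a => G.Adj (Sum.inr a) (Sum.inl (q'.head hq)))).card
        + (l.toFinset.filter
          (fun b => G.Adj (Sum.inr (q'.getLast hq)) (Sum.inl b))).card : ℕ) : ℚ) := by
      rw [hr] at *
      linarith [hE, hq2]
    exact_mod_cast h3
  have hkeyl := key l hch (List.Perm.refl l) hne
  have harc0 : ¬ G.Adj (Sum.inr (l.getD (r - 1) d)) (Sum.inl (l.getD 0 d)) := by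
    rw [← hhead, ← hlast]; exact hkeyl.1
  -- conversion between value filters and position filters
  have himg : l.toFinset = (Finset.range r).image (fun i => l.getD i d) := by
    ext x
    simp only [List.mem_toFinset, Finset.mem_image, Finset.mem_range]
    constructor
    · intro hx
      obtain ⟨i, hi, hx'⟩ := List.mem_iff_getElem.1 hx
      exact ⟨i, hi, by rw [List.getD_eq_getElem l d hi]; exact hx'⟩
    · rintro ⟨i, hi, rfl⟩; exact hgetD_mem i hi
  have hconv : ∀ p : Fin n → Prop,
      (l.toFinset.filter (fun a => p a)).card =
      ((Finset.range r).filter (fun i => p (l.getD i d))).card := by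
    intro p
    rw [himg, Finset.filter_image]
    apply Finset.card_image_of_injOn
    intro i hi j hj heq
    simp only [Finset.coe_filter, Set.mem_setOf_eq, Finset.mem_range] at hi hj
    exact hinj i j hi.1 hj.1 heq
  set A := (Finset.range r).filter
    (fun i => G.Adj (Sum.inr (l.getD i d)) (Sum.inl (l.getD 0 d))) with hAdef
  set B := (Finset.range r).filter
    (fun i => G.Adj (Sum.inr (l.getD (r - 1) d)) (Sum.inl (l.getD i d))) with hBdef
  have hs3 : 3 * r ≤ 2 * (A.card + B.card) := by
    have h2 := hkeyl.2
    rw [hhead, hlast] at h2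
    rw [hconv (fun a => G.Adj (Sum.inr a) (Sum.inl (l.getD 0 d))),
      hconv (fun b => G.Adj (Sum.inr (l.getD (r - 1) d)) (Sum.inl b))] at h2
    exact h2
  set C := A ∩ B with hCdef
  have hunion : (A ∪ B).card ≤ r := by
    have : A ∪ B ⊆ Finset.range r :=
      Finset.union_subset (Finset.filter_subset _ _) (Finset.filter_subset _ _)
    calc (A ∪ B).card ≤ (Finset.range r).card := Finset.card_le_card this
      _ = r := Finset.card_range r
  have hpin : C.card + (A ∪ B).card = A.card + B.card := Finset.card_inter_add_card_union A B
  have hCne : C.Nonempty := by rw [← Finset.card_pos]; omega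
  obtain ⟨c, hcC⟩ := hCne
  have hmemC : ∀ j ∈ C, 1 ≤ j ∧ j + 1 < r ∧
      G.Adj (Sum.inr (l.getD j d)) (Sum.inl (l.getD 0 d)) ∧
      G.Adj (Sum.inr (l.getD (r - 1) d)) (Sum.inl (l.getD j d)) := by
    intro j hj
    obtain ⟨hjA, hjB⟩ := Finset.mem_inter.1 hj
    obtain ⟨hjr, hadjA⟩ := Finset.mem_filter.1 hjA
    obtain ⟨_, hadjB⟩ := Finset.mem_filter.1 hjB
    rw [Finset.mem_range] at hjr
    have hj1 : 1 ≤ j := by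
      rcases Nat.eq_zero_or_pos j with h0 | h1
      · subst h0; exact absurd hadjB harc0
      · exact h1
    have hj2 : j + 1 < r := by
      rcases Nat.lt_or_ge (j + 1) r with h | h
      · exact h
      · have : j = r - 1 := by omega
        subst this; exact absurd hadjA harc0
    exact ⟨hj1, hj2, hadjA, hadjB⟩
  -- rotated paths
  have hrot : ∀ j ∈ C, ∀ k ∈ C, j ≤ k →
      (¬ G.Adj (Sum.inr (l.getD (j - 1) d)) (Sum.inl (l.getD (k + 1) d))) ∧
      3 * r ≤ 2 * ((l.toFinset.filter
          (fun a => G.Adj (Sum.inr a) (Sum.inl (l.getD (k + 1) d)))).card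
        + (l.toFinset.filter
          (fun b => G.Adj (Sum.inr (l.getD (j - 1) d)) (Sum.inl b))).card) := by
    intro j hj k hk hjk
    obtain ⟨hj1, hj2, hjA, hjB⟩ := hmemC j hj
    obtain ⟨hk1, hk2, hkA, hkB⟩ := hmemC k hk
    obtain ⟨Q, hQperm, hQch, hQne, hQh, hQl⟩ :=
      my_rot (fun a b => G.Adj (Sum.inr a) (Sum.inl b)) l d hch j k hj1 hjk
        (by omega) hjB hkA
    have h1 : Q.head hQne = l.getD (k + 1) d := by
      have := hQh
      rw [List.head?_eq_head hQne] at this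
      exact Option.some_inj.1 this
    have h2 : Q.getLast hQne = l.getD (j - 1) d := by
      have := hQl
      rw [List.getLast?_eq_getLast_of_ne_nil hQne] at this
      exact Option.some_inj.1 this
    have hk' := key Q hQch hQperm hQne
    rw [h1, h2] at hk'
    exact hk'
  -- degree bound at c
  obtain ⟨-, hdegc⟩ := hrot c hcC c hcC le_rfl
  set X := (l.toFinset.filter
      (fun a => G.Adj (Sum.inr a) (Sum.inl (l.getD (c + 1) d)))).card with hXdef
  set Y := (l.toFinset.filter
      (fun b => G.Adj (Sum.inr (l.getD (c - 1) d)) (Sum.inl b))).card with hYdef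
  set T1 := C.filter (· ≤ c) with hT1def
  set T2 := C.filter (c ≤ ·) with hT2def
  have hx1 : X + T1.card ≤ r := by
    set F1 := T1.image (fun j => l.getD (j - 1) d) with hF1def
    have hc1 : F1.card = T1.card := by
      apply Finset.card_image_of_injOn
      intro j1 hj1 j2 hj2 heq
      simp only [hT1def, Finset.coe_filter, Set.mem_setOf_eq] at hj1 hj2
      obtain ⟨b1, b2, -, -⟩ := hmemC j1 hj1.1
      obtain ⟨b3, b4, -, -⟩ := hmemC j2 hj2.1
      have := hinj (j1 - 1) (j2 - 1) (by omega) (by omega) heq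
      omega
    have hdisj : Disjoint (l.toFinset.filter
        (fun a => G.Adj (Sum.inr a) (Sum.inl (l.getD (c + 1) d)))) F1 := by
      rw [Finset.disjoint_left]
      intro x hx1' hx2'
      obtain ⟨j, hj, rfl⟩ := Finset.mem_image.1 hx2'
      obtain ⟨hjC, hjc⟩ := Finset.mem_filter.1 hj
      exact (hrot j hjC c hcC hjc).1 (Finset.mem_filter.1 hx1').2
    have hsubun : (l.toFinset.filter
        (fun a => G.Adj (Sum.inr a) (Sum.inl (l.getD (c + 1) d)))) ∪ F1 ⊆ l.toFinset := by
      apply Finset.union_subset (Finset.filter_subset _ _)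
      intro x hx
      obtain ⟨j, hj, rfl⟩ := Finset.mem_image.1 hx
      obtain ⟨hjC, -⟩ := Finset.mem_filter.1 hj
      obtain ⟨b1, b2, -, -⟩ := hmemC j hjC
      exact List.mem_toFinset.2 (hgetD_mem (j - 1) (by omega))
    calc X + T1.card = ((l.toFinset.filter
          (fun a => G.Adj (Sum.inr a) (Sum.inl (l.getD (c + 1) d)))) ∪ F1).card := by
          rw [Finset.card_union_of_disjoint hdisj, hc1]
      _ ≤ l.toFinset.card := Finset.card_le_card hsubun
      _ = r := List.toFinset_card_of_nodup hnd
  have hy1 : Y + T2.card ≤ r := by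
    set F2 := T2.image (fun k => l.getD (k + 1) d) with hF2def
    have hc2 : F2.card = T2.card := by
      apply Finset.card_image_of_injOn
      intro j1 hj1 j2 hj2 heq
      simp only [hT2def, Finset.coe_filter, Set.mem_setOf_eq] at hj1 hj2
      obtain ⟨b1, b2, -, -⟩ := hmemC j1 hj1.1
      obtain ⟨b3, b4, -, -⟩ := hmemC j2 hj2.1
      have := hinj (j1 + 1) (j2 + 1) (by omega) (by omega) heq
      omega
    have hdisj : Disjoint (l.toFinset.filter
        (fun b => G.Adj (Sum.inr (l.getD (c - 1) d)) (Sum.inl b))) F2 := by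
      rw [Finset.disjoint_left]
      intro x hx1' hx2'
      obtain ⟨k, hk, rfl⟩ := Finset.mem_image.1 hx2'
      obtain ⟨hkC, hkc⟩ := Finset.mem_filter.1 hk
      exact (hrot c hcC k hkC hkc).1 (Finset.mem_filter.1 hx1').2
    have hsubun : (l.toFinset.filter
        (fun b => G.Adj (Sum.inr (l.getD (c - 1) d)) (Sum.inl b))) ∪ F2 ⊆ l.toFinset := by
      apply Finset.union_subset (Finset.filter_subset _ _)
      intro x hx
      obtain ⟨k, hk, rfl⟩ := Finset.mem_image.1 hx
      obtain ⟨hkC, -⟩ := Finset.mem_filter.1 hk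
      obtain ⟨b1, b2, -, -⟩ := hmemC k hkC
      exact List.mem_toFinset.2 (hgetD_mem (k + 1) (by omega))
    calc Y + T2.card = ((l.toFinset.filter
          (fun b => G.Adj (Sum.inr (l.getD (c - 1) d)) (Sum.inl b))) ∪ F2).card := by
          rw [Finset.card_union_of_disjoint hdisj, hc2]
      _ ≤ l.toFinset.card := Finset.card_le_card hsubun
      _ = r := List.toFinset_card_of_nodup hnd
  have htu : T1.card + T2.card = C.card + 1 := by
    have hun : T1 ∪ T2 = C := by
      ext j
      simp only [hT1def, hT2def, Finset.mem_union, Finset.mem_filter]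
      constructor
      · rintro (⟨h, -⟩ | ⟨h, -⟩) <;> exact h
      · intro h
        rcases le_total j c with h' | h'
        · exact Or.inl ⟨h, h'⟩
        · exact Or.inr ⟨h, h'⟩
    have hint : T1 ∩ T2 = {c} := by
      ext j
      simp only [hT1def, hT2def, Finset.mem_inter, Finset.mem_filter, Finset.mem_singleton]
      constructor
      · rintro ⟨⟨-, h1⟩, ⟨-, h2⟩⟩; omega
      · rintro rfl; exact ⟨⟨hcC, le_rfl⟩, ⟨hcC, le_rfl⟩⟩
    have h := Finset.card_union_add_card_inter T1 T2
    rw [hun, hint, Finset.card_singleton] at h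
    omega
  omega
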